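/- arXiv:1012.4992 — 4 statements merged into one kernel-verified Lean document; each statement's English description precedes it below -/
import Mathlib

section
/- Fix k ≥ 1. Every update procedure of ordinal ω^k has a finite zero: if U is a map sending each family f = (f_v)_{v ∈ ℕ^k} of functions ℕ → ℕ (indexed by k-tuples of natural numbers ordered lexicographically) to an element of (ℕ^k × ℕ × ℕ) ∪ {∅}, U is continuous, and U satisfies the update condition with respect to the lexicographic order on ℕ^k, then there exists f with {(v,n) : f_v n ≠ 0} finite and U f = ∅ (Zero Theorem for update procedures of ordinal ω^k). -/
/-- The lexicographic (strict) order on `ℕ^k`. -/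
def LexLt {k : ℕ} (v w : Fin k → ℕ) : Prop :=
  ∃ i : Fin k, (∀ j : Fin k, j < i → v j = w j) ∧ v i < w i

/-!
Answer each instruction `U f = (v, n, m)` by setting `f_v n := m` and erasing every row above `v`.
The argument works for any well-ordered set of rows. By recursion on `i` in `WithTop I` we build
families `stage i`, zero from row `i` on and agreeing with one another below, whose orbits never
instruct a row below `i`. On the lowest row the orbit instructs, the update condition lets each slot
be written at most once, so that row converges. The successor stage keeps rows below `j`, takes the
limit of row `j` and erases the rest. The limit stage is the diagonal. In both cases the new family
is a pointwise limit of families whose orbits are already controlled. Continuity says that `U` is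
locally constant for the product topology, so this control passes to the limit's orbit. The orbit of
`stage ⊤` instructs no row at all, hence `U (stage ⊤) = none`.
-/

open Filter Topology Set Function

namespace UpdateProcedure

theorem isLocallyConstant_of_finset {I β : Type*} {U : (I → ℕ → ℕ) → β}
    (hU : ∀ f, ∃ A : Finset (I × ℕ), ∀ g, (∀ p ∈ A, g p.1 p.2 = f p.1 p.2) → U g = U f) :
    IsLocallyConstant U := by
  refine (IsLocallyConstant.iff_eventually_eq U).2 fun f => ?_
  obtain ⟨A, hA⟩ := hU f
  refine Eventually.mono ((eventually_all_finset A).2 fun p _ => ?_) hA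
  exact (continuous_apply_apply p.1 p.2).continuousAt.eventually_mem
    ((isOpen_discrete {f p.1 p.2}).mem_nhds rfl)

variable {I : Type*} [LinearOrder I]

def splice (v : I) (f : I → ℕ → ℕ) (r : ℕ → ℕ) : I → ℕ → ℕ :=
  fun p => if p < v then f p else if p = v then r else 0

section Splice

variable {v p : I} {f : I → ℕ → ℕ} {r : ℕ → ℕ}

theorem splice_of_lt (h : p < v) : splice v f r p = f p := if_pos h

theorem splice_self : splice v f r v = r := by simp [splice]

theorem splice_of_gt (h : v < p) : splice v f r p = 0 := by simp [splice, h.not_gt, h.ne']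

end Splice

variable (U : (I → ℕ → ℕ) → Option (I × ℕ × ℕ))

def step (f : I → ℕ → ℕ) : I → ℕ → ℕ :=
  match U f with
  | none => f
  | some (v, n, m) => splice v f (update (f v) n m)

def UpdateCondition : Prop :=
  ∀ (f g : I → ℕ → ℕ) (v : I) (n m h l : ℕ), (∀ w < v, f w = g w) →
    U f = some (v, n, m) → g v n = m → U g = some (v, h, l) → h ≠ n

def Confined (S : Set I) (F : I → ℕ → ℕ) : Prop :=
  ∀ t v n m, U ((step U)^[t] F) = some (v, n, m) → v ∈ S

noncomputable def settle (j : I) (F : I → ℕ → ℕ) : I → ℕ → ℕ :=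
  splice j F (limUnder atTop fun t => (step U)^[t] F j)

variable {U}

theorem step_of_eq_none {f : I → ℕ → ℕ} (h : U f = none) : step U f = f := by
  simp [step, h]

theorem step_of_eq_some {f : I → ℕ → ℕ} {v : I} {n m : ℕ} (h : U f = some (v, n, m)) :
    step U f = splice v f (update (f v) n m) := by
  simp [step, h]

theorem continuous_step (hU : IsLocallyConstant U) : Continuous (step U) := by
  refine continuous_iff_continuousAt.2 fun f => ?_
  have hloc := (IsLocallyConstant.iff_eventually_eq U).1 hU f
  cases hf : U f with
  | none =>
    exact continuousAt_id.congr (hloc.mono fun g hg => (step_of_eq_none (hg.trans hf)).symm)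
  | some q =>
    obtain ⟨v, n, m⟩ := q
    have hcont : Continuous fun g : I → ℕ → ℕ => splice v g (update (g v) n m) := by
      refine continuous_pi fun p => ?_
      unfold splice
      split_ifs
      · exact continuous_apply p
      · exact (continuous_apply v).update n continuous_const
      · exact continuous_const
    exact hcont.continuousAt.congr (hloc.mono fun g hg => (step_of_eq_some (hg.trans hf)).symm)

theorem eventually_iterate_step_eq (hU : IsLocallyConstant U) {α : Type*} {l : Filter α}
    {g : α → I → ℕ → ℕ} {G : I → ℕ → ℕ} (hg : Tendsto g l (𝓝 G)) (r : ℕ) :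
    ∀ᶠ x in l, U ((step U)^[r] (g x)) = U ((step U)^[r] G) :=
  hg.eventually <| (IsLocallyConstant.iff_eventually_eq _).1
    (hU.comp_continuous ((continuous_step hU).iterate r)) G

section Orbit

variable {F : I → ℕ → ℕ} {j : I}

theorem Confined.mono {S T : Set I} (h : Confined U S F) (hST : S ⊆ T) : Confined U T F :=
  fun t v n m ht => hST (h t v n m ht)

theorem Confined.iterate_apply_of_lt (h : Confined U (Ici j) F) {p : I} (hp : p < j) (t : ℕ) :
    (step U)^[t] F p = F p := by
  induction t with
  | zero => rfl
  | succ t ih =>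
    rw [iterate_succ_apply']
    cases hU : U ((step U)^[t] F) with
    | none => rw [step_of_eq_none hU, ih]
    | some q =>
      obtain ⟨v, n, m⟩ := q
      rw [step_of_eq_some hU, splice_of_lt (hp.trans_le (h t v n m hU)), ih]

theorem Confined.iterate_apply_apply_eq (h : Confined U (Ici j) F) {a b n : ℕ} (hab : a ≤ b)
    (hquiet : ∀ t, a ≤ t → t < b → ∀ m, U ((step U)^[t] F) ≠ some (j, n, m)) :
    (step U)^[b] F j n = (step U)^[a] F j n := by
  induction b, hab using Nat.le_induction with
  | base => rfl
  | succ b hab ih =>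
    rw [iterate_succ_apply', ← ih fun t hat htb => hquiet t hat (htb.trans b.lt_succ_self)]
    cases hU : U ((step U)^[b] F) with
    | none => rw [step_of_eq_none hU]
    | some q =>
      obtain ⟨v, n', m⟩ := q
      rw [step_of_eq_some hU]
      rcases (h b v n' m hU).lt_or_eq with hjv | rfl
      · rw [splice_of_lt hjv]
      · rw [splice_self, update_of_ne]
        rintro rfl
        exact hquiet b hab (lt_add_one b) m hU

theorem Confined.eq_of_eq_some (h : Confined U (Ici j) F) (hupd : UpdateCondition U)
    {a b n m m' : ℕ} (ha : U ((step U)^[a] F) = some (j, n, m))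
    (hb : U ((step U)^[b] F) = some (j, n, m')) : a = b := by
  wlog hab : a < b generalizing a b m m'
  · rcases (not_lt.1 hab).lt_or_eq with hba | hba
    exacts [(this hb ha hba).symm, hba.symm]
  exfalso
  induction b using Nat.strong_induction_on generalizing m' with
  | _ b ih =>
  have hslot : (step U)^[b] F j n = m := by
    rw [h.iterate_apply_apply_eq hab fun t hat htb m'' ht => ih t htb ht hat,
      iterate_succ_apply', step_of_eq_some ha, splice_self, update_self]
  exact hupd _ _ j n m n m'
    (fun w hw => by rw [h.iterate_apply_of_lt hw, h.iterate_apply_of_lt hw]) ha hslot hb rfl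

theorem Confined.tendsto_row (h : Confined U (Ici j) F) (hupd : UpdateCondition U) :
    Tendsto (fun t => (step U)^[t] F j) atTop (𝓝 (limUnder atTop fun t => (step U)^[t] F j)) := by
  have hconst : ∀ n, ∃ a, ∀ t, a ≤ t → (step U)^[t] F j n = (step U)^[a] F j n := by
    intro n
    by_cases hn : ∃ a m, U ((step U)^[a] F) = some (j, n, m)
    · obtain ⟨a, m, ha⟩ := hn
      refine ⟨a + 1, fun t ht => h.iterate_apply_apply_eq ht fun s hs _ m' hs' => ?_⟩
      have := h.eq_of_eq_some hupd ha hs'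
      omega
    · push Not at hn
      exact ⟨0, fun t _ => h.iterate_apply_apply_eq (Nat.zero_le t) fun s _ _ => hn s⟩
  choose a ha using hconst
  refine tendsto_nhds_limUnder ⟨fun n => (step U)^[a n] F j n, tendsto_pi_nhds.2 fun n => ?_⟩
  exact tendsto_const_nhds.congr' (eventually_atTop.2 ⟨a n, fun t ht => (ha n t ht).symm⟩)

theorem exists_quiet_time_erased_above (hF : ∀ p, j < p → F p = 0) {N : ℕ}
    (hN : ∀ t ≥ N, ∀ n m, U ((step U)^[t] F) ≠ some (j, n, m)) :
    ∃ N, (∀ t ≥ N, ∀ n m, U ((step U)^[t] F) ≠ some (j, n, m)) ∧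
      ∀ p, j < p → (step U)^[N] F p = 0 := by
  induction N with
  | zero => exact ⟨0, hN, hF⟩
  | succ N ih =>
    by_cases hj : ∃ n m, U ((step U)^[N] F) = some (j, n, m)
    · obtain ⟨n, m, hNj⟩ := hj
      exact ⟨N + 1, hN, fun p hp => by
        rw [iterate_succ_apply', step_of_eq_some hNj, splice_of_gt hp]⟩
    · push Not at hj
      refine ih fun t ht => ?_
      rcases ht.lt_or_eq with ht | rfl
      exacts [hN t ht, hj]

theorem confined_settle_of_eventually (hupd : UpdateCondition U) (h : Confined U (Ici j) F)
    (hF : ∀ p, j < p → F p = 0)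
    (hT : ∀ᶠ t in atTop, ∀ n m, U ((step U)^[t] F) ≠ some (j, n, m)) :
    Confined U (Ioi j) (settle U j F) := by
  obtain ⟨N, hN, hNzero⟩ :=
    exists_quiet_time_erased_above hF (eventually_atTop.1 hT).choose_spec
  have hsettle : settle U j F = (step U)^[N] F := by
    funext p
    rcases lt_trichotomy p j with hp | rfl | hp
    · rw [settle, splice_of_lt hp, h.iterate_apply_of_lt hp]
    · rw [settle, splice_self]
      refine tendsto_nhds_unique (h.tendsto_row hupd) (tendsto_const_nhds.congr' ?_)
      exact eventually_atTop.2 ⟨N, fun t ht =>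
        funext fun n => (h.iterate_apply_apply_eq ht fun s hs _ => hN s hs n).symm⟩
    · rw [settle, splice_of_gt hp, hNzero p hp]
  rw [hsettle]
  intro t v n m ht
  rw [← iterate_add_apply] at ht
  rcases (h _ _ _ _ ht).lt_or_eq with hjv | rfl
  · exact hjv
  · exact absurd ht (hN _ (Nat.le_add_left N t) n m)

theorem confined_settle_of_frequently (hU : IsLocallyConstant U) (hupd : UpdateCondition U)
    (h : Confined U (Ici j) F)
    (hT : ∃ᶠ t in atTop, ∃ n m, U ((step U)^[t] F) = some (j, n, m)) :
    Confined U (Ioi j) (settle U j F) := by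
  set l := atTop ⊓ 𝓟 {t | ∃ n m, U ((step U)^[t] F) = some (j, n, m)}
  have : l.NeBot := frequently_iff_neBot.1 hT
  have hlim : Tendsto (fun t => (step U)^[t + 1] F) l (𝓝 (settle U j F)) := by
    refine tendsto_pi_nhds.2 fun p => ?_
    rcases lt_trichotomy p j with hp | rfl | hp
    · simp only [settle, splice_of_lt hp, h.iterate_apply_of_lt hp]
      exact tendsto_const_nhds
    · rw [settle, splice_self]
      exact ((h.tendsto_row hupd).comp (tendsto_add_atTop_nat 1)).mono_left inf_le_left
    · rw [settle, splice_of_gt hp]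
      refine tendsto_const_nhds.congr' ((eventually_principal.2 ?_).filter_mono inf_le_right)
      rintro t ⟨n, m, ht⟩
      dsimp only
      rw [iterate_succ_apply', step_of_eq_some ht, splice_of_gt hp]
  intro r v n m hr
  have hev : ∀ᶠ t in l, U ((step U)^[r + (t + 1)] F) = some (v, n, m) :=
    (eventually_iterate_step_eq hU hlim r).mono fun t ht => by rw [iterate_add_apply, ht, hr]
  obtain ⟨t₀, ht₀⟩ := hev.exists
  rcases (h _ _ _ _ ht₀).lt_or_eq with hjv | rfl
  · exact hjv
  obtain ⟨t₁, ht₁, hlt⟩ := (hev.and ((eventually_gt_atTop t₀).filter_mono inf_le_left)).exists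
  have := h.eq_of_eq_some hupd ht₀ ht₁
  omega

theorem confined_settle (hU : IsLocallyConstant U) (hupd : UpdateCondition U)
    (h : Confined U (Ici j) F) (hF : ∀ p, j < p → F p = 0) :
    Confined U (Ioi j) (settle U j F) := by
  by_cases hT : ∃ᶠ t in atTop, ∃ n m, U ((step U)^[t] F) = some (j, n, m)
  · exact confined_settle_of_frequently hU hupd h hT
  · exact confined_settle_of_eventually hupd h hF (by simpa [not_frequently] using hT)

end Orbit

section Stage

variable [WellFoundedLT I]

open scoped Classical in
variable (U) in
/-- At a successor `j ⋖ i` settle row `j`; at a limit take the diagonal, which does not depend on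
the chosen `j` by `stage_apply_of_lt_of_le`. -/
noncomputable def stage : WithTop I → I → ℕ → ℕ :=
  WellFoundedLT.fix fun i stage =>
    if h : ∃ j : I, ↑j ⋖ i then settle U h.choose (stage h.choose h.choose_spec.lt)
    else fun p => if hp : ∃ j < i, ↑p < j then stage hp.choose hp.choose_spec.1 p else 0

theorem stage_of_covBy {j : I} {i : WithTop I} (h : ↑j ⋖ i) :
    stage U i = settle U j (stage U j) := by
  have hex : ∃ j : I, ↑j ⋖ i := ⟨j, h⟩
  have hj : hex.choose = j := WithTop.coe_injective (hex.choose_spec.unique_left h)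
  rw [stage, WellFoundedLT.fix_eq, dif_pos hex]
  dsimp only
  rw [hj]

open scoped Classical in
theorem stage_apply_of_forall_not_covBy {i : WithTop I} (hi : ∀ j : I, ¬ ↑j ⋖ i) (p : I) :
    stage U i p = if hp : ∃ j < i, ↑p < j then stage U hp.choose p else 0 := by
  rw [stage, WellFoundedLT.fix_eq, dif_neg (not_exists.2 hi)]

theorem stage_apply_of_lt_of_le {p : I} {i j : WithTop I} (hpj : ↑p < j) (hji : j ≤ i) :
    stage U i p = stage U j p := by
  induction i using WellFoundedLT.induction generalizing j with
  | _ i ih =>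
  rcases hji.eq_or_lt with rfl | hji
  · rfl
  by_cases hsucc : ∃ k : I, ↑k ⋖ i
  · obtain ⟨k, hk⟩ := hsucc
    have hjk : j ≤ k := hk.le_of_lt hji
    rw [stage_of_covBy hk, settle, splice_of_lt (WithTop.coe_lt_coe.1 (hpj.trans_le hjk)),
      ih k hk.lt hpj hjk]
  · push Not at hsucc
    have hp : ∃ c < i, ↑p < c := ⟨j, hji, hpj⟩
    rw [stage_apply_of_forall_not_covBy hsucc, dif_pos hp]
    obtain ⟨hci, hpc⟩ := hp.choose_spec
    rcases le_total hp.choose j with hcj | hjc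
    · exact (ih j hji hpc hcj).symm
    · exact ih _ hci hpj hjc

theorem stage_apply_of_le {p : I} {i : WithTop I} (h : i ≤ ↑p) : stage U i p = 0 := by
  by_cases hsucc : ∃ k : I, ↑k ⋖ i
  · obtain ⟨k, hk⟩ := hsucc
    rw [stage_of_covBy hk, settle, splice_of_gt (WithTop.coe_lt_coe.1 (hk.lt.trans_le h))]
  · push Not at hsucc
    rw [stage_apply_of_forall_not_covBy hsucc, dif_neg]
    rintro ⟨c, hci, hpc⟩
    exact (hpc.trans hci).not_ge h

theorem tendsto_stage {i : WithTop I} (hi : ∀ j : I, ¬ ↑j ⋖ i) :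
    Tendsto (fun j : Iio i => stage U j) atTop (𝓝 (stage U i)) := by
  refine tendsto_pi_nhds.2 fun p => tendsto_const_nhds.congr' ?_
  rcases lt_or_ge (p : WithTop I) i with hp | hp
  · obtain ⟨c, hpc, hci⟩ := (not_covBy_iff hp).1 (hi p)
    exact (eventually_ge_atTop ⟨c, hci⟩).mono fun j hj =>
      stage_apply_of_lt_of_le (hpc.trans_le hj) j.2.le
  · exact Eventually.of_forall fun j => by
      dsimp only
      rw [stage_apply_of_le hp, stage_apply_of_le (j.2.le.trans hp)]

theorem confined_stage (hU : IsLocallyConstant U) (hupd : UpdateCondition U) (i : WithTop I) :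
    Confined U {v | i ≤ ↑v} (stage U i) := by
  induction i using WellFoundedLT.induction with
  | _ i ih =>
  by_cases hsucc : ∃ k : I, ↑k ⋖ i
  · obtain ⟨k, hk⟩ := hsucc
    have hk' : Confined U (Ici k) (stage U k) := by
      have := ih k hk.lt
      simp only [WithTop.coe_le_coe] at this
      exact this
    rw [stage_of_covBy hk]
    have hzero : ∀ p, k < p → stage U k p = 0 := fun p hp =>
      stage_apply_of_le (WithTop.coe_le_coe.2 hp.le)
    exact (confined_settle hU hupd hk' hzero).mono fun v hv =>
      le_of_not_gt (hk.2 (WithTop.coe_lt_coe.2 hv))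
  · push Not at hsucc
    intro t v n m hv
    by_contra hvi
    obtain ⟨c, hvc, hci⟩ := (not_covBy_iff (lt_of_not_ge hvi)).1 (hsucc v)
    have : Nonempty (Iio i) := ⟨⟨c, hci⟩⟩
    obtain ⟨j, hj, hjc⟩ := ((eventually_iterate_step_eq hU (tendsto_stage hsucc) t).and
      (eventually_ge_atTop ⟨c, hci⟩)).exists
    exact (hvc.trans_le hjc).not_ge (ih j j.2 t v n m (hj.trans hv))

theorem exists_eq_none (hU : IsLocallyConstant U) (hupd : UpdateCondition U) :
    ∃ F, U F = none := by
  refine ⟨stage U ⊤, ?_⟩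
  cases h : U (stage U ⊤) with
  | none => rfl
  | some q =>
    obtain ⟨v, n, m⟩ := q
    exact absurd (confined_stage hU hupd ⊤ 0 v n m h) (by simp)

theorem exists_finite_zero
    (hcont : ∀ f, ∃ A : Finset (I × ℕ), ∀ g, (∀ p ∈ A, g p.1 p.2 = f p.1 p.2) → U g = U f)
    (hupd : UpdateCondition U) :
    ∃ f : I → ℕ → ℕ, {p : I × ℕ | f p.1 p.2 ≠ 0}.Finite ∧ U f = none := by
  classical
  obtain ⟨F, hF⟩ := exists_eq_none (isLocallyConstant_of_finset hcont) hupd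
  obtain ⟨A, hA⟩ := hcont F
  refine ⟨fun v n => if (v, n) ∈ A then F v n else 0, A.finite_toSet.subset fun p hp => ?_, ?_⟩
  · by_contra hpA
    exact hp (if_neg hpA)
  · rw [hA _ fun p hp => if_pos hp, hF]

end Stage

end UpdateProcedure

theorem zero_theorem_omega_pow_k_update_procedure_general (k : ℕ)
    (U : ((Fin k → ℕ) → ℕ → ℕ) → Option ((Fin k → ℕ) × ℕ × ℕ))
    -- continuity
    (hcont : ∀ f : (Fin k → ℕ) → ℕ → ℕ, ∃ A : Finset ((Fin k → ℕ) × ℕ),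
      ∀ g : (Fin k → ℕ) → ℕ → ℕ, (∀ p ∈ A, g p.1 p.2 = f p.1 p.2) → U g = U f)
    -- update condition w.r.t. the lexicographic order
    (hupd : ∀ (f g : (Fin k → ℕ) → ℕ → ℕ) (v : Fin k → ℕ) (n m h l : ℕ),
      (∀ w : Fin k → ℕ, LexLt w v → f w = g w) →
      U f = some (v, n, m) → g v n = m → U g = some (v, h, l) → h ≠ n) :
    ∃ f : (Fin k → ℕ) → ℕ → ℕ,
      Set.Finite {p : (Fin k → ℕ) × ℕ | f p.1 p.2 ≠ 0} ∧ U f = none :=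
  -- `LexLt` is definitionally the order of the well-order `Lex (Fin k → ℕ)`.
  UpdateProcedure.exists_finite_zero (I := Lex (Fin k → ℕ)) hcont hupd

/-- Zero Theorem for update procedures of ordinal `ω^k` (with `k ≥ 1`,
identifying `ω^k` with `ℕ^k` ordered lexicographically): every continuous map
`U` on `ℕ^k`-indexed families of functions satisfying the update condition
with respect to the lexicographic order has a finite zero. -/
theorem zero_theorem_omega_pow_k_update_procedure (k : ℕ) (hk : 1 ≤ k)
    (U : ((Fin k → ℕ) → ℕ → ℕ) → Option ((Fin k → ℕ) × ℕ × ℕ))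
    -- continuity
    (hcont : ∀ f : (Fin k → ℕ) → ℕ → ℕ, ∃ A : Finset ((Fin k → ℕ) × ℕ),
      ∀ g : (Fin k → ℕ) → ℕ → ℕ, (∀ p ∈ A, g p.1 p.2 = f p.1 p.2) → U g = U f)
    -- update condition w.r.t. the lexicographic order
    (hupd : ∀ (f g : (Fin k → ℕ) → ℕ → ℕ) (v : Fin k → ℕ) (n m h l : ℕ),
      (∀ w : Fin k → ℕ, LexLt w v → f w = g w) →
      U f = some (v, n, m) → g v n = m → U g = some (v, h, l) → h ≠ n) :
    ∃ f : (Fin k → ℕ) → ℕ → ℕ,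
      Set.Finite {p : (Fin k → ℕ) × ℕ | f p.1 p.2 ≠ 0} ∧ U f = none :=
  zero_theorem_omega_pow_k_update_procedure_general k U hcont hupd
end

section
/- Let U be a unary update procedure and define s₀ = λx.0 and s_{i+1} = s_i ⊕ U(s_i). Then the learning process generated by U terminates: there exists k ∈ ℕ with U(s_k) = ∅; in particular s_k is a zero of U with finite support. -/
/-!
Along the learning process `s`, an update `U (s k) = (n, m)` is never undone: by the update
condition no later stage updates position `n` again, so `s j n = m` for all `j > k`. Hence every
coordinate of `s` is eventually constant, with pointwise limit `t`. By continuity `U` is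
constant near `t`, so `U (s j) = U t` for all large `j`. If `U t = (n, m)`, then both `U (s j)`
and `U (s (j + 1))` equal `(n, m)` although `s (j + 1) n = m`, contradicting the update condition;
so `U t = ∅`. Every stage changes at most one value, so every `s k` has finite support.
-/

/-- Controlled update of a single function: `(f ⊕ (n,m)) x = m` if `x = n`,
`f x` otherwise; `f ⊕ ∅ = f`. -/
def oplus1 (f : ℕ → ℕ) : Option (ℕ × ℕ) → ℕ → ℕ
  | none => f
  | some (n, m) => fun x => if x = n then m else f x

/-- The learning process generated by a unary update procedure `U`:
`s 0 = λx.0`, `s (i+1) = s i ⊕ U (s i)`. -/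
def learnProc1 (U : (ℕ → ℕ) → Option (ℕ × ℕ)) : ℕ → ℕ → ℕ
  | 0 => fun _ => 0
  | i + 1 => oplus1 (learnProc1 U i) (U (learnProc1 U i))

open Filter

def UpdateCondition (U : (ℕ → ℕ) → Option (ℕ × ℕ)) : Prop :=
  ∀ (f g : ℕ → ℕ) (n m h l : ℕ), U f = some (n, m) → g n = m → U g = some (h, l) → h ≠ n

theorem oplus1_some (f : ℕ → ℕ) (n m : ℕ) : oplus1 f (some (n, m)) = Function.update f n m := by
  funext x
  simp [oplus1, Function.update_apply]

theorem oplus1_apply_of_forall_ne {f : ℕ → ℕ} {u : Option (ℕ × ℕ)} {x : ℕ}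
    (hu : ∀ n m, u = some (n, m) → n ≠ x) : oplus1 f u x = f x := by
  rcases u with _ | ⟨n, m⟩
  · rfl
  · rw [oplus1_some, Function.update_of_ne (hu n m rfl).symm]

theorem finite_support_oplus1 {f : ℕ → ℕ} (hf : (Function.support f).Finite)
    (u : Option (ℕ × ℕ)) : (Function.support (oplus1 f u)).Finite := by
  rcases u with _ | ⟨n, m⟩
  · exact hf
  · rw [oplus1_some]
    refine (hf.insert n).subset fun x hx => ?_
    by_cases hxn : x = n
    · exact Or.inl hxn
    · exact Or.inr (by rwa [Function.mem_support, Function.update_of_ne hxn] at hx)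

namespace learnProc1

theorem finite_support (U : (ℕ → ℕ) → Option (ℕ × ℕ)) (k : ℕ) :
    (Function.support (learnProc1 U k)).Finite := by
  induction k with
  | zero => simp [learnProc1]
  | succ k ih => exact finite_support_oplus1 ih _

variable {U : (ℕ → ℕ) → Option (ℕ × ℕ)}

theorem succ_apply_of_eq_some {k n m : ℕ} (hk : U (learnProc1 U k) = some (n, m)) :
    learnProc1 U (k + 1) n = m := by
  simp [learnProc1, hk, oplus1]

theorem apply_of_lt (hU : UpdateCondition U) {k n m : ℕ}
    (hk : U (learnProc1 U k) = some (n, m)) {j : ℕ} (hkj : k < j) : learnProc1 U j n = m := by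
  induction j, hkj using Nat.le_induction with
  | base => exact succ_apply_of_eq_some hk
  | succ j _ ih =>
    change oplus1 (learnProc1 U j) (U (learnProc1 U j)) n = m
    rw [oplus1_apply_of_forall_ne fun h l hj => hU _ _ n m h l hk ih hj, ih]

theorem apply_eq_zero_of_forall_ne_some {x : ℕ} (hx : ∀ k m, U (learnProc1 U k) ≠ some (x, m))
    (j : ℕ) : learnProc1 U j x = 0 := by
  induction j with
  | zero => rfl
  | succ j ih =>
    change oplus1 (learnProc1 U j) (U (learnProc1 U j)) x = 0
    rw [oplus1_apply_of_forall_ne fun n m hj hnx => hx j m (hnx ▸ hj :), ih]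

theorem eventually_const (hU : UpdateCondition U) (x : ℕ) :
    ∃ c, ∀ᶠ j in atTop, learnProc1 U j x = c := by
  by_cases hx : ∃ k m, U (learnProc1 U k) = some (x, m)
  · obtain ⟨k, m, hk⟩ := hx
    exact ⟨m, eventually_atTop.2 ⟨k + 1, fun j hj => apply_of_lt hU hk hj⟩⟩
  · push Not at hx
    exact ⟨0, Eventually.of_forall (apply_eq_zero_of_forall_ne_some hx)⟩

theorem succ_ne_of_eq_some (hU : UpdateCondition U) {k n m : ℕ}
    (hk : U (learnProc1 U k) = some (n, m)) : U (learnProc1 U (k + 1)) ≠ some (n, m) :=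
  fun hk' => hU _ _ n m n m hk (succ_apply_of_eq_some hk) hk' rfl

end learnProc1

theorem eventually_eq_of_forall_eventually_apply_eq {α β γ ι : Type*} {l : Filter ι}
    {U : (α → β) → γ} {s : ι → α → β} {t : α → β}
    (hcont : ∃ A : Finset α, ∀ g : α → β, (∀ a ∈ A, g a = t a) → U g = U t)
    (hs : ∀ a, ∀ᶠ j in l, s j a = t a) : ∀ᶠ j in l, U (s j) = U t := by
  obtain ⟨A, hA⟩ := hcont
  filter_upwards [(eventually_all_finset A).2 fun a _ => hs a] with j hj
  exact hA (s j) hj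

/-- The learning process generated by a unary update procedure terminates:
there is `k` with `U (s k) = ∅`; in particular `s k` is a zero of `U` with
finite support. -/
theorem termination_unary_learning_process (U : (ℕ → ℕ) → Option (ℕ × ℕ))
    -- continuity
    (hcont : ∀ f : ℕ → ℕ, ∃ A : Finset ℕ,
      ∀ g : ℕ → ℕ, (∀ n ∈ A, g n = f n) → U g = U f)
    -- update condition
    (hupd : ∀ (f g : ℕ → ℕ) (n m h l : ℕ),
      U f = some (n, m) → g n = m → U g = some (h, l) → h ≠ n) :
    ∃ k : ℕ, U (learnProc1 U k) = none ∧
      Set.Finite {n : ℕ | learnProc1 U k n ≠ 0} := by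
  choose t ht using learnProc1.eventually_const (U := U) hupd
  obtain ⟨M, hM⟩ := eventually_atTop.1 (eventually_eq_of_forall_eventually_apply_eq (hcont t) ht)
  refine ⟨M, ?_, learnProc1.finite_support U M⟩
  rcases hUt : U t with _ | ⟨n, m⟩
  · exact (hM M le_rfl).trans hUt
  · exact absurd ((hM (M + 1) M.le_succ).trans hUt)
      (learnProc1.succ_ne_of_eq_some hupd ((hM M le_rfl).trans hUt))
end

section
/- Let A be a type, f : A → (ℕ → A), and N : A → ((ℕ → ℕ) → (ℕ → ℕ)) be such that N a is a modulus of convergence for f a for every a ∈ A. Let g : ℕ → A and let M be a modulus of convergence for g. For h : ℕ → ℕ set N'_h := λ n, N (g n) h n, and define H₁ h z := N'_h (M (h ∘ N'_h) z). Then H₁ is a modulus of convergence for the function λ n, f (g n) n (Merging of Functions). -/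
/-- `f↓[n,m]`: the function `f` is constant on the interval `[n,m]`. -/
def ConvOn {A : Type*} (f : ℕ → A) (n m : ℕ) : Prop :=
  ∀ x, n ≤ x → x ≤ m → f x = f n

/-- `h ≥ id`. -/
def GeId (h : ℕ → ℕ) : Prop := ∀ x, x ≤ h x

/-- `M` is a modulus of convergence for `f`. -/
def IsModulus {A : Type*} (M : (ℕ → ℕ) → ℕ → ℕ) (f : ℕ → A) : Prop :=
  (∀ h, GeId h → GeId (M h)) ∧
  (∀ h, GeId h → ∀ z, ConvOn f (M h z) (h (M h z)))

/-! With `m := M (h ∘ N'_h) z` and `p := N'_h m`, the modulus `M` makes `g` constant on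
`[m, h p]`, so on `[p, h p]` the merged function `n ↦ f (g n) n` coincides with `f (g m)`,
which the modulus `N (g m)` makes constant there. -/

theorem GeId.comp {h k : ℕ → ℕ} (hh : GeId h) (hk : GeId k) : GeId (h ∘ k) :=
  fun x => (hk x).trans (hh (k x))

theorem ConvOn.diagonal {A : Type*} {f : A → ℕ → A} {g : ℕ → A} {n p m : ℕ}
    (hg : ConvOn g n m) (hnp : n ≤ p) (hf : ConvOn (f (g n)) p m) :
    ConvOn (fun k => f (g k) k) p m := by
  intro x hpx hxm
  have hgx : g x = g n := hg x (hnp.trans hpx) hxm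
  have hgp : g p = g n := hg p hnp (hpx.trans hxm)
  simp only [hgx, hgp, hf x hpx hxm]

/-- Merging of Functions: given a family `f : A → (ℕ → A)` with moduli of
convergence `N a` for each `f a`, and `g : ℕ → A` with modulus `M`, setting
`N'_h := λ n, N (g n) h n` and `H₁ h z := N'_h (M (h ∘ N'_h) z)`, the map `H₁`
is a modulus of convergence for `λ n, f (g n) n`. -/
theorem merging_of_functions {A : Type*} (f : A → ℕ → A)
    (N : A → (ℕ → ℕ) → ℕ → ℕ) (hN : ∀ a : A, IsModulus (N a) (f a))
    (g : ℕ → A) (M : (ℕ → ℕ) → ℕ → ℕ) (hM : IsModulus M g) :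
    IsModulus
      (fun h z =>
        (fun n => N (g n) h n) (M (h ∘ fun n => N (g n) h n) z))
      (fun n => f (g n) n) := by
  have hN'_ge {h : ℕ → ℕ} (hh : GeId h) : GeId fun n => N (g n) h n :=
    fun x => (hN (g x)).1 h hh x
  refine ⟨fun h hh => (hN'_ge hh).comp (hM.1 _ (hh.comp (hN'_ge hh))), fun h hh z => ?_⟩
  exact (hM.2 _ (hh.comp (hN'_ge hh)) z).diagonal (hN'_ge hh _) ((hN _).2 h hh _)
end

section
/- Let A be a type and f : ℕ → A. Then the following two notions of convergence are equivalent: (i) for every h : ℕ → ℕ there exists x ∈ ℕ with f↓[x, h x]; (ii) for every h : ℕ → ℕ with h ≥ id there exists α : ℕ → ℕ with α ≥ id such that f↓[α z, h (α z)] for every z ∈ ℕ. -/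
/-!
For (i) ⇒ (ii), the stable interval found by (i) for `z ↦ h (max z n)` either starts at or
beyond `n`, or starts at some `x < n`, in which case it contains `[n, h n]` because `h ≥ id`;
choosing such a start for each `n` gives `α`. For (ii) ⇒ (i), apply (ii) to `max h id`.
-/

theorem ConvOn.mono {A : Type*} {f : ℕ → A} {n m n' m' : ℕ} (hc : ConvOn f n m)
    (hn : n ≤ n') (hn' : n' ≤ m) (hm : m' ≤ m) : ConvOn f n' m' :=
  fun x hx hxm => (hc x (hn.trans hx) (hxm.trans hm)).trans (hc n' hn hn').symm

theorem exists_ge_convOn {A : Type*} {f : ℕ → A} (hf : ∀ h : ℕ → ℕ, ∃ x, ConvOn f x (h x))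
    {h : ℕ → ℕ} (hh : GeId h) (n : ℕ) : ∃ m, n ≤ m ∧ ConvOn f m (h m) := by
  obtain ⟨x, hx⟩ := hf fun z => h (max z n)
  rcases le_total n x with hnx | hxn
  · rw [max_eq_left hnx] at hx
    exact ⟨x, hnx, hx⟩
  · rw [max_eq_right hxn] at hx
    exact ⟨n, le_rfl, hx.mono hxn (hh n) le_rfl⟩

/-- The two no-counterexample notions of convergence are equivalent:
(i) for every `h` there is `x` with `f↓[x, h x]`;
(ii) for every `h ≥ id` there is `α ≥ id` enumerating intervals
`[α z, h (α z)]` on which `f` is constant. -/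
theorem convergence_notions_equivalent {A : Type*} (f : ℕ → A) :
    (∀ h : ℕ → ℕ, ∃ x : ℕ, ConvOn f x (h x)) ↔
    (∀ h : ℕ → ℕ, GeId h →
      ∃ α : ℕ → ℕ, GeId α ∧ ∀ z : ℕ, ConvOn f (α z) (h (α z))) := by
  constructor
  · intro hf h hh
    choose α hα hconv using exists_ge_convOn hf hh
    exact ⟨α, hα, hconv⟩
  · intro hf h
    obtain ⟨α, -, hα⟩ := hf (fun x => max (h x) x) fun x => le_max_right _ _
    exact ⟨α 0, (hα 0).mono le_rfl (le_max_right _ _) (le_max_left _ _)⟩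
end
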